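/- Under the same hypotheses (Diophantine conditions ∑_a ε(m^{(a)}) m_i^{(a)} m_j^{(a)} m_k^{(a)} = 0, ∑_a ε(m^{(a)}) m_i^{(a)} m_j^{(a)} = 0, ∑_a ε(m^{(a)}) m_i^{(a)} = 0), the certificate h_i(x;q;p) = ∏_{a=1}^K θ_p(x^{m^{(a)}}; q)_{m_i^{(a)}}^{ε(m^{(a)})} is p-elliptic in q: h_i(x; pq; p) = h_i(x; q; p). -/

import Mathlib

open scoped BigOperators

/-- The infinite q-Pochhammer symbol `(x;q)_∞ = ∏_{j≥0} (1 - x q^j)`. -/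
noncomputable def pochInf (x q : ℂ) : ℂ := ∏' j : ℕ, (1 - x * q ^ j)

/-- The theta function `θ_p(x) = (x;p)_∞ (p/x;p)_∞`. -/
noncomputable def theta (p x : ℂ) : ℂ := pochInf x p * pochInf (p / x) p

/-- The elliptic shifted factorial `θ_p(x;q)_n` for `n ∈ ℤ`. -/
noncomputable def thetaPoch (p q x : ℂ) : ℤ → ℂ
  | Int.ofNat n => ∏ j ∈ Finset.range n, theta p (x * q ^ j)
  | Int.negSucc n => (∏ j ∈ Finset.range (n + 1), theta p (x * q ^ (-(j + 1 : ℤ))))⁻¹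

/-!
Since `θ_p(px) = -x⁻¹ θ_p(x)`, every factor `θ_p(x (pq)^j) = θ_p(p^j · x q^j)` of `θ_p(x;pq)_k`
is `θ_p(x q^j)` times a monomial in `-x`, `q` and `p`. Multiplying these out gives
`θ_p(x;pq)_k = (-x)^(-C(k,2)) q^(-(2 C(k,3) + C(k,2))) p^(-C(k,3)) θ_p(x;q)_k`.
In the certificate (`x ↦ x^(m^(a))`, `k ↦ m_i^(a)`) the total exponents of `-1`, `x_l`, `q`
and `p` are `ε`-weighted sums of `C(m_i,2)`, `C(m_i,2) m_l` and `C(m_i,3)`: integer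
combinations of the moments killed by the Diophantine conditions.
-/

open Finset

open Polynomial in
lemma two_mul_choose_two (k : ℤ) : 2 * Ring.choose k 2 = k * (k - 1) := by
  have h := Ring.descPochhammer_eq_factorial_smul_choose k 2
  simp only [descPochhammer_succ_right, descPochhammer_zero, smeval_mul, smeval_sub, smeval_X,
    smeval_natCast, smeval_one] at h
  norm_num [Nat.factorial] at h
  linarith

open Polynomial in
lemma six_mul_choose_three (k : ℤ) : 6 * Ring.choose k 3 = k * (k - 1) * (k - 2) := by
  have h := Ring.descPochhammer_eq_factorial_smul_choose k 3
  simp only [descPochhammer_succ_right, descPochhammer_zero, smeval_mul, smeval_sub, smeval_X,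
    smeval_natCast, smeval_one] at h
  norm_num [Nat.factorial] at h
  linarith

section MomentSums

variable {ι : Type*} (s : Finset ι) (ε k : ι → ℤ)

lemma sum_mul_choose_two_mul_eq_zero (w : ι → ℤ)
    (h2 : ∑ a ∈ s, ε a * k a * k a * w a = 0) (h1 : ∑ a ∈ s, ε a * k a * w a = 0) :
    ∑ a ∈ s, ε a * Ring.choose (k a) 2 * w a = 0 := by
  have h : 2 * ∑ a ∈ s, ε a * Ring.choose (k a) 2 * w a
      = ∑ a ∈ s, ε a * k a * k a * w a - ∑ a ∈ s, ε a * k a * w a := by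
    rw [mul_sum, ← sum_sub_distrib]
    refine sum_congr rfl fun a _ => ?_
    linear_combination ε a * w a * two_mul_choose_two (k a)
  linarith

lemma sum_mul_choose_three_eq_zero (h3 : ∑ a ∈ s, ε a * k a * k a * k a = 0)
    (h2 : ∑ a ∈ s, ε a * k a * k a = 0) (h1 : ∑ a ∈ s, ε a * k a = 0) :
    ∑ a ∈ s, ε a * Ring.choose (k a) 3 = 0 := by
  have h : 6 * ∑ a ∈ s, ε a * Ring.choose (k a) 3
      = ∑ a ∈ s, ε a * k a * k a * k a - 3 * ∑ a ∈ s, ε a * k a * k a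
        + 2 * ∑ a ∈ s, ε a * k a := by
    rw [mul_sum, mul_sum, mul_sum, ← sum_sub_distrib, ← sum_add_distrib]
    refine sum_congr rfl fun a _ => ?_
    linear_combination ε a * six_mul_choose_three (k a)
  linarith

end MomentSums

lemma eq_of_succ_eq_mul {G₀ : Type*} [GroupWithZero G₀] {F G g : ℤ → G₀} (hg : ∀ k, g k ≠ 0)
    (h0 : F 0 = G 0) (hF : ∀ k, F (k + 1) = F k * g k) (hG : ∀ k, G (k + 1) = G k * g k) :
    F = G := by
  funext k
  induction k using Int.induction_on with
  | zero => exact h0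
  | succ k ih => rw [hF, hG, ih]
  | pred k ih => exact mul_right_cancel₀ (hg _) (by rw [← hF, ← hG, sub_add_cancel, ih])

section ShiftedProd

variable {M : Type*} [DivisionCommMonoid M]

/-- `∏_{0 ≤ j < k} f j`, read as `(∏_{k ≤ j < 0} f j)⁻¹` when `k < 0`, as in `thetaPoch`. -/
def shiftedProd (f : ℤ → M) : ℤ → M
  | Int.ofNat n => ∏ j ∈ range n, f j
  | Int.negSucc n => (∏ j ∈ range (n + 1), f (-(j + 1 : ℤ)))⁻¹

lemma shiftedProd_mul (f g : ℤ → M) (k : ℤ) :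
    shiftedProd (f * g) k = shiftedProd f k * shiftedProd g k := by
  cases k <;> simp only [shiftedProd, Pi.mul_apply, prod_mul_distrib, mul_inv]

lemma shiftedProd_eq_of_succ {f E : ℤ → M} (h0 : E 0 = 1)
    (hsucc : ∀ k, E (k + 1) = E k * f k) (k : ℤ) : shiftedProd f k = E k := by
  have hnat : ∀ n : ℕ, ∏ j ∈ range n, f j = E n := by
    intro n
    induction n with
    | zero => simp [h0]
    | succ n ih => rw [prod_range_succ, ih, Nat.cast_succ, hsucc]
  have hneg : ∀ n : ℕ, E (-n) * ∏ j ∈ range n, f (-(j + 1 : ℤ)) = 1 := by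
    intro n
    induction n with
    | zero => simp [h0]
    | succ n ih =>
      rw [← ih, prod_range_succ, show -(n : ℤ) = -(n + 1 : ℕ) + 1 by push_cast; ring, hsucc]
      push_cast
      rw [mul_comm (∏ j ∈ range n, _), mul_assoc]
  cases k with
  | ofNat n => exact hnat n
  | negSucc n => exact (eq_inv_of_mul_eq_one_left (hneg (n + 1))).symm

end ShiftedProd

section Theta

variable {p : ℂ}

lemma multipliable_one_sub_mul_pow (hp : ‖p‖ < 1) (x : ℂ) :
    Multipliable fun j : ℕ => 1 - x * p ^ j := by
  have hsum : Summable fun j : ℕ => ‖-(x * p ^ j)‖ := by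
    simpa [norm_pow] using (summable_geometric_of_lt_one (norm_nonneg p) hp).mul_left ‖x‖
  simpa [sub_eq_add_neg] using multipliable_one_add_of_summable hsum

lemma pochInf_eq_one_sub_mul (hp : ‖p‖ < 1) (x : ℂ) :
    pochInf x p = (1 - x) * pochInf (x * p) p := by
  have hshift : Multipliable fun j : ℕ => 1 - x * p ^ (j + 1) := by
    exact (multipliable_one_sub_mul_pow hp (x * p)).congr fun j => by ring
  rw [pochInf, tprod_eq_zero_mul' (f := fun j : ℕ => 1 - x * p ^ j) hshift, pow_zero, mul_one,
    pochInf]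
  exact congrArg _ (tprod_congr fun j => by ring)

lemma theta_p_mul (hp : ‖p‖ < 1) (hp0 : p ≠ 0) {x : ℂ} (hx : x ≠ 0) :
    theta p (p * x) = -x⁻¹ * theta p x := by
  have hinv : p / (p * x) = x⁻¹ := by field_simp
  rw [theta, theta, hinv, pochInf_eq_one_sub_mul hp x⁻¹, pochInf_eq_one_sub_mul hp x,
    inv_mul_eq_div, mul_comm x p]
  field_simp
  ring

lemma theta_zpow_mul (hp : ‖p‖ < 1) (hp0 : p ≠ 0) {x : ℂ} (hx : x ≠ 0) (s : ℤ) :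
    theta p (p ^ s * x) = (-x) ^ (-s) * p ^ (-Ring.choose s 2) * theta p x := by
  have hy : ∀ s : ℤ, p ^ s * x ≠ 0 := fun s => by positivity
  suffices (fun s : ℤ => theta p (p ^ s * x))
      = fun s => (-x) ^ (-s) * p ^ (-Ring.choose s 2) * theta p x from congrFun this s
  refine eq_of_succ_eq_mul (g := fun s => -(p ^ s * x)⁻¹)
    (fun s => neg_ne_zero.mpr (inv_ne_zero (hy s))) (by simp) (fun s => ?_) (fun s => ?_)
  · rw [zpow_add_one₀ hp0, mul_right_comm, mul_comm _ p, theta_p_mul hp hp0 (hy s), mul_comm]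
  · rw [Ring.choose_succ_succ, Ring.choose_one_right, neg_add, neg_add,
      zpow_add₀ (neg_ne_zero.mpr hx), zpow_add₀ hp0, zpow_neg p s, zpow_neg_one, inv_neg, mul_inv]
    ring

end Theta

section ThetaPoch

variable {p q x : ℂ}

lemma thetaPoch_eq_shiftedProd (k : ℤ) :
    thetaPoch p q x k = shiftedProd (fun j : ℤ => theta p (x * q ^ j)) k := by
  cases k <;> simp [thetaPoch, shiftedProd]

lemma theta_mul_mul_zpow (hp : ‖p‖ < 1) (hp0 : p ≠ 0) (hq0 : q ≠ 0) (hx : x ≠ 0) (j : ℤ) :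
    theta p (x * (p * q) ^ j)
      = (-x) ^ (-j) * q ^ (-(j * j)) * p ^ (-Ring.choose j 2) * theta p (x * q ^ j) := by
  rw [show x * (p * q) ^ j = p ^ j * (x * q ^ j) by rw [mul_zpow]; ring,
    theta_zpow_mul hp hp0 (by positivity), neg_mul_eq_neg_mul, mul_zpow, ← zpow_mul,
    mul_neg]

/-- `(-x)^(-k(k-1)/2) q^(-k(k-1)(2k-1)/6) p^(-k(k-1)(k-2)/6)`, written with binomial coefficients
so that the exponents are integers without division. -/
noncomputable def quasiFactor (p q x : ℂ) (k : ℤ) : ℂ :=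
  (-x) ^ (-Ring.choose k 2) * q ^ (-(2 * Ring.choose k 3 + Ring.choose k 2))
    * p ^ (-Ring.choose k 3)

lemma quasiFactor_succ (hp0 : p ≠ 0) (hq0 : q ≠ 0) (hx : x ≠ 0) (k : ℤ) :
    quasiFactor p q x (k + 1)
      = quasiFactor p q x k * ((-x) ^ (-k) * q ^ (-(k * k)) * p ^ (-Ring.choose k 2)) := by
  have h2 : Ring.choose (k + 1) 2 = Ring.choose k 2 + k := by
    rw [Ring.choose_succ_succ, Ring.choose_one_right, add_comm]
  have h3 : Ring.choose (k + 1) 3 = Ring.choose k 3 + Ring.choose k 2 := by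
    rw [Ring.choose_succ_succ, add_comm]
  have hq : -(2 * Ring.choose (k + 1) 3 + Ring.choose (k + 1) 2)
      = -(2 * Ring.choose k 3 + Ring.choose k 2) + -(k * k) := by
    linear_combination -2 * h3 - h2 - two_mul_choose_two k
  rw [quasiFactor, quasiFactor, hq, h2, h3, neg_add (Ring.choose k 2), neg_add (Ring.choose k 3),
    zpow_add₀ (neg_ne_zero.mpr hx), zpow_add₀ hq0, zpow_add₀ hp0]
  ring

lemma thetaPoch_p_mul (hp : ‖p‖ < 1) (hp0 : p ≠ 0) (hq0 : q ≠ 0) (hx : x ≠ 0) (k : ℤ) :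
    thetaPoch p (p * q) x k = quasiFactor p q x k * thetaPoch p q x k := by
  have hfactor : (fun j : ℤ => theta p (x * (p * q) ^ j))
      = (fun j : ℤ => (-x) ^ (-j) * q ^ (-(j * j)) * p ^ (-Ring.choose j 2))
        * fun j : ℤ => theta p (x * q ^ j) :=
    funext (theta_mul_mul_zpow hp hp0 hq0 hx)
  rw [thetaPoch_eq_shiftedProd, thetaPoch_eq_shiftedProd, hfactor, shiftedProd_mul,
    shiftedProd_eq_of_succ (by simp [quasiFactor]) (quasiFactor_succ hp0 hq0 hx)]

end ThetaPoch

lemma prod_zpow_eq_zpow_sum₀ {ι G₀ : Type*} [CommGroupWithZero G₀] {a : G₀} (ha : a ≠ 0)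
    (s : Finset ι) (f : ι → ℤ) : ∏ i ∈ s, a ^ f i = a ^ ∑ i ∈ s, f i := by
  induction s using Finset.cons_induction with
  | empty => simp
  | cons i s hi ih => rw [prod_cons, sum_cons, ih, zpow_add₀ ha]

lemma prod_quasiFactor_zpow_eq_one {ι κ : Type*} [Fintype ι] [Fintype κ] {p q : ℂ} (hp0 : p ≠ 0)
    (hq0 : q ≠ 0) {x : κ → ℂ} (hx : ∀ l, x l ≠ 0) (m : ι → κ → ℤ) (ε k : ι → ℤ)
    (h2 : ∑ a, ε a * Ring.choose (k a) 2 = 0)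
    (h2x : ∀ l, ∑ a, ε a * Ring.choose (k a) 2 * m a l = 0)
    (h3 : ∑ a, ε a * Ring.choose (k a) 3 = 0) :
    ∏ a, quasiFactor p q (∏ l, x l ^ m a l) (k a) ^ ε a = 1 := by
  have hsign : ∑ a, -Ring.choose (k a) 2 * ε a = 0 := by
    rw [← neg_eq_zero, ← sum_neg_distrib, ← h2]; exact sum_congr rfl fun a _ => by ring
  have hx_exp : ∀ l, ∑ a, m a l * -Ring.choose (k a) 2 * ε a = 0 := fun l => by
    rw [← neg_eq_zero, ← sum_neg_distrib, ← h2x l]; exact sum_congr rfl fun a _ => by ring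
  have hq_exp : ∑ a, -(2 * Ring.choose (k a) 3 + Ring.choose (k a) 2) * ε a = 0 := by
    have e : ∑ a, -(2 * Ring.choose (k a) 3 + Ring.choose (k a) 2) * ε a
        = -2 * ∑ a, ε a * Ring.choose (k a) 3 - ∑ a, ε a * Ring.choose (k a) 2 := by
      rw [mul_sum, ← sum_sub_distrib]; exact sum_congr rfl fun a _ => by ring
    rw [e, h3, h2, mul_zero, sub_zero]
  have hp_exp : ∑ a, -Ring.choose (k a) 3 * ε a = 0 := by
    rw [← neg_eq_zero, ← sum_neg_distrib, ← h3]; exact sum_congr rfl fun a _ => by ring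
  simp only [quasiFactor, neg_eq_neg_one_mul (∏ l, _), mul_zpow, ← prod_zpow, ← zpow_mul,
    prod_mul_distrib]
  rw [prod_comm (s := univ) (t := univ)]
  simp only [prod_zpow_eq_zpow_sum₀ (a := (-1 : ℂ)) (by norm_num), prod_zpow_eq_zpow_sum₀ hq0,
    prod_zpow_eq_zpow_sum₀ hp0, prod_zpow_eq_zpow_sum₀ (hx _), hsign, hx_exp, hq_exp, hp_exp,
    zpow_zero, prod_const_one, mul_one]

theorem certificate_elliptic_in_q_general (K n : ℕ)
    (m : Fin K → Fin n → ℤ) (ε : Fin K → ℤ)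
    (p q : ℂ) (hp : ‖p‖ < 1) (hp0 : p ≠ 0) (hq0 : q ≠ 0)
    (x : Fin n → ℂ) (hx : ∀ l, x l ≠ 0)
    (h3 : ∀ i j k : Fin n, ∑ a, ε a * m a i * m a j * m a k = 0)
    (h2 : ∀ i j : Fin n, ∑ a, ε a * m a i * m a j = 0)
    (h1 : ∀ i : Fin n, ∑ a, ε a * m a i = 0) :
    ∀ i : Fin n,
      (∏ a, thetaPoch p (p * q) (∏ l, x l ^ m a l) (m a i) ^ ε a)
        = ∏ a, thetaPoch p q (∏ l, x l ^ m a l) (m a i) ^ ε a := by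
  intro i
  have hy : ∀ a, ∏ l, x l ^ m a l ≠ 0 := fun a =>
    prod_ne_zero_iff.mpr fun l _ => zpow_ne_zero _ (hx l)
  simp only [thetaPoch_p_mul hp hp0 hq0 (hy _), mul_zpow, prod_mul_distrib]
  rw [prod_quasiFactor_zpow_eq_one hp0 hq0 hx m ε (m · i), one_mul]
  · simpa using sum_mul_choose_two_mul_eq_zero univ ε (m · i) 1 (by simpa using h2 i i)
      (by simpa using h1 i)
  · exact fun l => sum_mul_choose_two_mul_eq_zero univ ε (m · i) (m · l) (h3 i i l) (h2 i l)
  · exact sum_mul_choose_three_eq_zero univ ε (m · i) (h3 i i i) (h2 i i) (h1 i)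

theorem certificate_elliptic_in_q (K n : ℕ) (hK : 0 < K) (hn : 0 < n)
    (m : Fin K → Fin n → ℤ) (ε : Fin K → ℤ)
    (p q : ℂ) (hp : ‖p‖ < 1) (hp0 : p ≠ 0) (hq0 : q ≠ 0)
    (x : Fin n → ℂ) (hx : ∀ l, x l ≠ 0)
    (hreg : ∀ (a : Fin K) (k s : ℤ),
      theta p ((∏ l, x l ^ m a l) * q ^ k * p ^ s) ≠ 0)
    (h3 : ∀ i j k : Fin n, ∑ a, ε a * m a i * m a j * m a k = 0)
    (h2 : ∀ i j : Fin n, ∑ a, ε a * m a i * m a j = 0)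
    (h1 : ∀ i : Fin n, ∑ a, ε a * m a i = 0) :
    ∀ i : Fin n,
      (∏ a, thetaPoch p (p * q) (∏ l, x l ^ m a l) (m a i) ^ ε a)
        = ∏ a, thetaPoch p q (∏ l, x l ^ m a l) (m a i) ^ ε a :=
  certificate_elliptic_in_q_general K n m ε p q hp hp0 hq0 x hx h3 h2 h1
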